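/- arXiv:1109.5096 — 3 statements merged into one kernel-verified Lean document; each statement's English description precedes it below -/
import Mathlib

section
/- Let f ∈ L^∞([0,∞)) satisfy f > ε almost everywhere for some ε > 0, and |f(s) − 1| ≤ J e^{−as} almost everywhere for constants J > 0 and a ∈ (0,2). Let λ be a solution of the Riccati equation λ′ + λ² = f(s) with λ(0) > 0. Then λ is a positive Lipschitz function and there exists a constant C = C(a, J, λ(0)) > 0 such that |λ(s) − 1| ≤ C e^{−as} for all s > 0. -/
/-!
Everything is a comparison argument with barriers. If a continuous solution of the integrated
equation starts below a barrier `φ`, and the integrand of the solution is at most `φ'` wherever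
the solution is above `φ`, then it stays below `φ`: at the last time it touched `φ`, integrating
the two derivatives gives a contradiction.

Below `min (λ 0) √ε` one has `λ' = f - λ² > 0`, so `λ` stays positive. The function
`1 + C e^{-as}` is a supersolution once `J ≤ (2 - a) C`, which gives the upper bound. For the
lower bound, positivity of `λ` makes `1 - C e^{-as/2}` a subsolution; hence `λ ≥ 1 - (2 - a)/2`
from some time `T` on, and from then on `1 - C e^{-as}` is a subsolution. Finally `f - λ²` is
bounded, so `λ` is Lipschitz.
-/

open Set MeasureTheory Filter Topology Real

theorem le_of_sub_eq_integral_of_ae_le {g φ G Φ : ℝ → ℝ} {T T' : ℝ}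
    (hg : ContinuousOn g (Icc T T')) (hφ : ContinuousOn φ (Icc T T'))
    (hG : IntervalIntegrable G volume T T') (hΦ : IntervalIntegrable Φ volume T T')
    (hg_eq : ∀ s ∈ Icc T T', ∀ t ∈ Icc T T', g t - g s = ∫ u in s..t, G u)
    (hφ_eq : ∀ s ∈ Icc T T', ∀ t ∈ Icc T T', φ t - φ s = ∫ u in s..t, Φ u)
    (hT : g T ≤ φ T)
    (hGΦ : ∀ᵐ u ∂volume.restrict (Ioo T T'), φ u < g u → G u ≤ Φ u) :
    ∀ t ∈ Icc T T', g t ≤ φ t := by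
  intro t ht
  by_contra! hlt
  have hsub : Icc T t ⊆ Icc T T' := Icc_subset_Icc_right ht.2
  set S := {s ∈ Icc T t | g s ≤ φ s}
  have hS_bdd : BddAbove S := ⟨t, fun s hs => hs.1.2⟩
  obtain ⟨⟨ht₁T, ht₁t⟩, ht₁⟩ : sSup S ∈ S :=
    (isClosed_Icc.isClosed_le (hg.mono hsub) (hφ.mono hsub)).csSup_mem
      ⟨T, ⟨le_rfl, ht.1⟩, hT⟩ hS_bdd
  set t₁ := sSup S
  have hgap : ∀ u ∈ Ioc t₁ t, φ u < g u := fun u hu => by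
    by_contra! h
    exact hu.1.not_ge (le_csSup hS_bdd ⟨⟨ht₁T.trans hu.1.le, hu.2⟩, h⟩)
  have huIcc : uIcc t₁ t ⊆ uIcc T T' := by
    rw [uIcc_of_le ht₁t, uIcc_of_le (ht.1.trans ht.2)]
    exact Icc_subset_Icc ht₁T ht.2
  have hmono : ∫ u in t₁..t, G u ≤ ∫ u in t₁..t, Φ u := by
    refine intervalIntegral.integral_mono_ae_restrict ht₁t (hG.mono_set huIcc)
      (hΦ.mono_set huIcc) ?_
    rw [← Measure.restrict_congr_set Ioo_ae_eq_Icc]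
    filter_upwards [ae_restrict_of_ae_restrict_of_subset (Ioo_subset_Ioo ht₁T ht.2) hGΦ,
      ae_restrict_mem measurableSet_Ioo] with u hu hmem
    exact hu (hgap u (Ioo_subset_Ioc_self hmem))
  have hmem₁ : t₁ ∈ Icc T T' := ⟨ht₁T, ht₁t.trans ht.2⟩
  linarith [hg_eq t₁ hmem₁ t ht, hφ_eq t₁ hmem₁ t ht]

theorem lipschitzOnWith_of_sub_eq_integral {g G : ℝ → ℝ} {S : Set ℝ} {K : NNReal}
    (hS : S.OrdConnected) (hg : ∀ s ∈ S, ∀ t ∈ S, g t - g s = ∫ u in s..t, G u)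
    (hG : ∀ᵐ u ∂volume.restrict S, |G u| ≤ K) : LipschitzOnWith K g S := by
  refine LipschitzOnWith.of_dist_le_mul fun x hx y hy => ?_
  rw [Real.dist_eq, Real.dist_eq, hg y hy x hx]
  refine intervalIntegral.norm_integral_le_of_norm_le_const_ae (f := G) ?_
  filter_upwards [(ae_restrict_iff' hS.measurableSet).1 hG] with u hu hmem
  exact hu (hS.uIcc_subset hy hx (uIoc_subset_uIcc hmem))

theorem sub_eq_integral_mul_exp (C k s t : ℝ) :
    C * exp (k * t) - C * exp (k * s) = ∫ u in s..t, C * k * exp (k * u) := by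
  refine (intervalIntegral.integral_eq_sub_of_hasDerivAt (f := fun u => C * exp (k * u))
    (fun u _ => ?_)
    ((by fun_prop : Continuous fun u => C * k * exp (k * u)).intervalIntegrable _ _)).symm
  simpa [mul_comm, mul_left_comm, mul_assoc] using
    ((hasDerivAt_id u).const_mul k).exp.const_mul C

/-- The integrated form of `lam' + lam ^ 2 = f` on `[0, ∞)`: `lam` is absolutely continuous and
solves the equation almost everywhere. -/
structure IsRiccatiSolution (f lam : ℝ → ℝ) : Prop where
  locallyIntegrableOn : LocallyIntegrableOn f (Ici 0)
  continuousOn : ContinuousOn lam (Ici 0)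
  eq_add_integral : ∀ s ∈ Ici (0:ℝ), lam s = lam 0 + ∫ u in (0:ℝ)..s, (f u - lam u ^ 2)

namespace IsRiccatiSolution

variable {f lam : ℝ → ℝ}

theorem intervalIntegrable (h : IsRiccatiSolution f lam) {s t : ℝ} (hs : 0 ≤ s) (ht : 0 ≤ t) :
    IntervalIntegrable (fun u => f u - lam u ^ 2) volume s t :=
  ((h.locallyIntegrableOn.sub ((h.continuousOn.pow 2).locallyIntegrableOn measurableSet_Ici))
    |>.integrableOn_compact_subset (fun _ hu => (le_min hs ht).trans hu.1) isCompact_uIcc)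
    |>.intervalIntegrable

theorem sub_eq_integral (h : IsRiccatiSolution f lam) {s t : ℝ} (hs : 0 ≤ s) (ht : 0 ≤ t) :
    lam t - lam s = ∫ u in s..t, (f u - lam u ^ 2) := by
  rw [h.eq_add_integral t ht, h.eq_add_integral s hs, add_sub_add_left_eq_sub,
    intervalIntegral.integral_interval_sub_left (h.intervalIntegrable le_rfl ht)
      (h.intervalIntegrable le_rfl hs)]

theorem pos (h : IsRiccatiSolution f lam) {ε : ℝ} (hε : 0 < ε)
    (hf : ∀ᵐ u ∂volume.restrict (Ici 0), ε < f u) (h0 : 0 < lam 0) :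
    ∀ t ∈ Ici (0:ℝ), 0 < lam t := by
  intro t ht
  by_contra! hle
  have hcont : ContinuousOn lam (Icc 0 t) := h.continuousOn.mono Icc_subset_Ici_self
  obtain ⟨⟨⟨ht₀0, ht₀t⟩, hzero⟩, hfirst⟩ :=
    (isClosed_Icc.isClosed_le hcont continuousOn_const).isLeast_csInf ⟨t, ⟨ht, le_rfl⟩, hle⟩
      ⟨0, fun s hs => hs.1.1⟩
  set t₀ := sInf {s ∈ Icc 0 t | lam s ≤ 0}
  have hbefore : ∀ u ∈ Ico 0 t₀, 0 < lam u := fun u hu => by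
    by_contra! h
    exact hu.2.not_ge (hfirst ⟨⟨hu.1, hu.2.le.trans ht₀t⟩, h⟩)
  set m := min (lam 0) √ε
  have hm : ∀ s ∈ Icc 0 t₀, m ≤ lam s := by
    refine le_of_sub_eq_integral_of_ae_le (G := 0) (Φ := fun u => f u - lam u ^ 2)
      continuousOn_const (h.continuousOn.mono Icc_subset_Ici_self) intervalIntegrable_const
      (h.intervalIntegrable le_rfl ht₀0) (fun _ _ _ _ => by simp)
      (fun s hs t ht => h.sub_eq_integral hs.1 ht.1) (min_le_left _ _) ?_
    filter_upwards [ae_restrict_of_ae_restrict_of_subset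
        (Ioo_subset_Icc_self.trans Icc_subset_Ici_self) hf,
      ae_restrict_mem measurableSet_Ioo] with u hfu hu hlt
    have hpos := hbefore u (Ioo_subset_Ico_self hu)
    have hsq : lam u ^ 2 < ε := by
      have := min_le_right (lam 0) √ε
      nlinarith [sq_sqrt hε.le]
    simp only [Pi.zero_apply]
    linarith
  linarith [hm t₀ ⟨ht₀0, le_rfl⟩, lt_min h0 (sqrt_pos.2 hε)]

theorem le_one_add_mul_exp (h : IsRiccatiSolution f lam) {a J C : ℝ} (hC : 0 ≤ C)
    (hJC : J ≤ (2 - a) * C)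
    (hf : ∀ᵐ u ∂volume.restrict (Ici 0), f u ≤ 1 + J * exp (-a * u))
    (h0 : lam 0 ≤ 1 + C) : ∀ t ∈ Ici (0:ℝ), lam t ≤ 1 + C * exp (-a * t) := by
  intro t ht
  refine le_of_sub_eq_integral_of_ae_le (G := fun u => f u - lam u ^ 2)
    (φ := fun u => 1 + C * exp (-a * u)) (Φ := fun u => C * -a * exp (-a * u))
    (h.continuousOn.mono Icc_subset_Ici_self) (by fun_prop) (h.intervalIntegrable le_rfl ht)
    ((by fun_prop : Continuous fun u => C * -a * exp (-a * u)).intervalIntegrable _ _)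
    (fun s hs t ht => h.sub_eq_integral hs.1 ht.1)
    (fun s _ t _ => by rw [add_sub_add_left_eq_sub]; exact sub_eq_integral_mul_exp C (-a) s t)
    (by simpa using h0) ?_ t ⟨ht, le_rfl⟩
  filter_upwards [ae_restrict_of_ae_restrict_of_subset
    (Ioo_subset_Icc_self.trans Icc_subset_Ici_self) hf] with u hfu hlt
  set w := C * exp (-a * u)
  have hw : 0 ≤ w := by positivity
  have hJw : J * exp (-a * u) ≤ (2 - a) * w := by
    rw [← mul_assoc]; exact mul_le_mul_of_nonneg_right hJC (exp_pos _).le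
  nlinarith [mul_self_lt_mul_self (by linarith : 0 ≤ 1 + w) hlt]

theorem one_sub_mul_exp_le (h : IsRiccatiSolution f lam) {a b J C δ T : ℝ} (hT : 0 ≤ T)
    (hba : b ≤ a) (hJ : 0 ≤ J) (hC : 0 ≤ C) (hJC : J ≤ (2 - b - δ) * C) (hδ : δ ≤ 1)
    (hf : ∀ᵐ u ∂volume.restrict (Ici 0), 1 - J * exp (-a * u) ≤ f u)
    (hnear : ∀ u ∈ Ici T, 1 - δ ≤ lam u) (hT₀ : 1 - C * exp (-b * T) ≤ lam T) :
    ∀ t ∈ Ici T, 1 - C * exp (-b * t) ≤ lam t := by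
  intro t ht
  refine le_of_sub_eq_integral_of_ae_le (g := fun u => 1 - C * exp (-b * u))
    (G := fun u => -C * -b * exp (-b * u)) (Φ := fun u => f u - lam u ^ 2) (by fun_prop)
    (h.continuousOn.mono fun u hu => hT.trans hu.1)
    ((by fun_prop : Continuous fun u => -C * -b * exp (-b * u)).intervalIntegrable _ _)
    (h.intervalIntegrable hT (hT.trans ht))
    (fun s _ t _ => by convert sub_eq_integral_mul_exp (-C) (-b) s t using 1; ring)
    (fun s hs t ht => h.sub_eq_integral (hT.trans hs.1) (hT.trans ht.1)) hT₀ ?_ t ⟨ht, le_rfl⟩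
  filter_upwards [ae_restrict_of_ae_restrict_of_subset
      (Ioo_subset_Icc_self.trans (Icc_subset_Ici_self.trans (Ici_subset_Ici.2 hT))) hf,
    ae_restrict_mem measurableSet_Ioo] with u hfu hu hlt
  have hu0 : 0 ≤ u := hT.trans hu.1.le
  set w := C * exp (-b * u)
  have hw : 0 ≤ w := by positivity
  have hlam := hnear u hu.1.le
  have hJw : J * exp (-a * u) ≤ (2 - b - δ) * w := calc
    J * exp (-a * u) ≤ J * exp (-b * u) := by gcongr
    _ ≤ (2 - b - δ) * w := by
      rw [← mul_assoc]; exact mul_le_mul_of_nonneg_right hJC (exp_pos _).le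
  nlinarith [mul_self_le_mul_self (by linarith : 0 ≤ lam u) hlt.le,
    mul_le_mul_of_nonneg_left (by linarith : w ≤ δ) hw]

theorem exists_le_one_add_mul_exp (h : IsRiccatiSolution f lam) {a J : ℝ} (ha₂ : a < 2)
    (hJ : 0 ≤ J) (hf : ∀ᵐ u ∂volume.restrict (Ici 0), f u ≤ 1 + J * exp (-a * u)) :
    ∃ C ≥ 0, ∀ t ∈ Ici (0:ℝ), lam t ≤ 1 + C * exp (-a * t) := by
  have h2a : 0 < 2 - a := by linarith
  refine ⟨max (J / (2 - a)) (lam 0 - 1), le_max_of_le_left (by positivity), ?_⟩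
  refine h.le_one_add_mul_exp (le_max_of_le_left (by positivity)) ?_ hf
    (by linarith [le_max_right (J / (2 - a)) (lam 0 - 1)])
  rw [← div_le_iff₀' h2a]
  exact le_max_left _ _

theorem exists_one_sub_mul_exp_le (h : IsRiccatiSolution f lam) {a J : ℝ} (ha₀ : 0 < a)
    (ha₂ : a < 2) (hJ : 0 ≤ J)
    (hf : ∀ᵐ u ∂volume.restrict (Ici 0), 1 - J * exp (-a * u) ≤ f u)
    (hpos : ∀ t ∈ Ici (0:ℝ), 0 < lam t) :
    ∃ C > 0, ∀ t ∈ Ici (0:ℝ), 1 - C * exp (-a * t) ≤ lam t := by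
  set δ := (2 - a) / 2
  have hδ : 0 < δ := by simp only [δ]; linarith
  have hδ₁ : δ ≤ 1 := by simp only [δ]; linarith
  set C₁ := max (J / δ) 1
  have hslow := h.one_sub_mul_exp_le (b := a / 2) (δ := 1) (C := C₁) le_rfl (by linarith) hJ
    (by positivity)
    (by rw [show 2 - a / 2 - 1 = δ by ring, ← div_le_iff₀' hδ]; exact le_max_left _ _)
    le_rfl hf (fun u hu => by linarith [hpos u hu])
    (by
      simp only [mul_zero, exp_zero, mul_one]
      linarith [le_max_right (J / δ) 1, hpos 0 self_mem_Ici])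
  obtain ⟨T, hT0, hnear⟩ : ∃ T ≥ 0, ∀ u ∈ Ici T, 1 - δ ≤ lam u := by
    have hlim : Tendsto (fun u => C₁ * exp (-(a / 2) * u)) atTop (𝓝 0) := by
      simpa using (tendsto_exp_atBot.comp
        (tendsto_id.const_mul_atTop_of_neg (by linarith : -(a / 2) < 0))).const_mul C₁
    obtain ⟨T, hT⟩ := eventually_atTop.1 (hlim.eventually (ge_mem_nhds hδ))
    exact ⟨max T 0, le_max_right _ _, fun u hu => by
      linarith [hslow u (mem_Ici.2 ((le_max_right _ _).trans hu)),
        hT u ((le_max_left _ _).trans hu)]⟩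
  set C₂ := max (J / δ) (exp (a * T))
  have hone : ∀ t ≤ T, 1 ≤ C₂ * exp (-a * t) := fun t ht => calc
    1 ≤ exp (a * T) * exp (-a * t) := by rw [← exp_add]; exact one_le_exp (by nlinarith)
    _ ≤ C₂ * exp (-a * t) := by gcongr; exact le_max_right _ _
  have hfast := h.one_sub_mul_exp_le (b := a) (C := C₂) (δ := δ) hT0 le_rfl hJ (by positivity)
    (by rw [show 2 - a - δ = δ by ring, ← div_le_iff₀' hδ]; exact le_max_left _ _)
    hδ₁ hf hnear (by linarith [hone T le_rfl, hpos T hT0])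
  refine ⟨C₂, by positivity, fun t ht => ?_⟩
  rcases le_total T t with hTt | htT
  · exact hfast t hTt
  · linarith [hone t htT, hpos t ht]

theorem lipschitzOnWith (h : IsRiccatiSolution f lam) {B M : ℝ}
    (hf : ∀ᵐ u ∂volume.restrict (Ici 0), |f u| ≤ B)
    (hM : ∀ t ∈ Ici (0:ℝ), |lam t| ≤ M) :
    LipschitzOnWith (B + M ^ 2).toNNReal lam (Ici 0) := by
  refine lipschitzOnWith_of_sub_eq_integral ordConnected_Ici
    (fun s hs t ht => h.sub_eq_integral hs ht) ?_
  filter_upwards [hf, ae_restrict_mem measurableSet_Ici] with u hfu hu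
  have hsq : lam u ^ 2 ≤ M ^ 2 := by
    rw [← sq_abs]; exact pow_le_pow_left₀ (abs_nonneg _) (hM u hu) 2
  calc |f u - lam u ^ 2| ≤ |f u| + |lam u ^ 2| := abs_sub _ _
    _ ≤ B + M ^ 2 := by rw [abs_of_nonneg (sq_nonneg (lam u))]; linarith
    _ ≤ _ := le_coe_toNNReal _

end IsRiccatiSolution

/-- **Riccati estimate.** If `f ∈ L^∞([0,∞))` satisfies `f > ε` a.e. and `|f(s) - 1| ≤ J e^{-as}`
a.e. with `a ∈ (0,2)`, and `λ` is an (absolutely continuous) solution of `λ' + λ² = f` with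
`λ(0) > 0`, then `λ` is a positive Lipschitz function and `|λ - 1| ≤ C e^{-as}` for all `s > 0`,
for some constant `C = C(a, J, λ(0)) > 0`. -/
theorem riccati_estimate (a J ε : ℝ) (ha₀ : 0 < a) (ha₂ : a < 2) (hJ : 0 < J) (hε : 0 < ε)
    (f lam : ℝ → ℝ)
    (hfmeas : AEStronglyMeasurable f (volume.restrict (Ici (0:ℝ))))
    (hfbdd : ∃ B : ℝ, ∀ᵐ s ∂(volume.restrict (Ici (0:ℝ))), |f s| ≤ B)
    (hflow : ∀ᵐ s ∂(volume.restrict (Ici (0:ℝ))), ε < f s)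
    (hfdecay : ∀ᵐ s ∂(volume.restrict (Ici (0:ℝ))), |f s - 1| ≤ J * Real.exp (-a * s))
    (hlamcont : ContinuousOn lam (Ici 0))
    (hlam0 : 0 < lam 0)
    (hODE : ∀ s ∈ Ici (0:ℝ), lam s = lam 0 + ∫ u in (0:ℝ)..s, (f u - (lam u) ^ 2)) :
    (∀ s ∈ Ici (0:ℝ), 0 < lam s) ∧
    (∃ K : NNReal, LipschitzOnWith K lam (Ici 0)) ∧
    ∃ C > 0, ∀ s > (0:ℝ), |lam s - 1| ≤ C * Real.exp (-a * s) := by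
  obtain ⟨B, hB⟩ := hfbdd
  have h : IsRiccatiSolution f lam :=
    ⟨(locallyIntegrableOn_iff_locallyIntegrable_restrict isClosed_Ici).2
      ((memLp_top_of_bound hfmeas B hB).locallyIntegrable le_top), hlamcont, hODE⟩
  have hpos := h.pos hε hflow hlam0
  obtain ⟨C₁, hC₁, hupper⟩ := h.exists_le_one_add_mul_exp ha₂ hJ.le
    (hfdecay.mono fun s hs => by linarith [(abs_le.1 hs).2])
  obtain ⟨C₂, hC₂, hlower⟩ := h.exists_one_sub_mul_exp_le ha₀ ha₂ hJ.le
    (hfdecay.mono fun s hs => by linarith [(abs_le.1 hs).1]) hpos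
  have hbdd : ∀ t ∈ Ici (0:ℝ), |lam t| ≤ 1 + C₁ := fun t ht => by
    have := exp_le_one_iff.2 (by nlinarith [mem_Ici.1 ht] : -a * t ≤ 0)
    rw [abs_of_pos (hpos t ht)]
    nlinarith [hupper t ht]
  refine ⟨hpos, ⟨_, h.lipschitzOnWith hB hbdd⟩, max C₁ C₂, lt_max_of_lt_right hC₂,
    fun s hs => abs_sub_le_iff.2 ⟨?_, ?_⟩⟩
  · nlinarith [hupper s hs.le, le_max_left C₁ C₂, exp_pos (-a * s)]
  · nlinarith [hlower s hs.le, le_max_right C₁ C₂, exp_pos (-a * s)]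
end

section
/- Let (M, g) be a complete Riemannian manifold and suppose there exist r > 0 and Q > 1 such that every point of M admits harmonic coordinates on the geodesic ball of radius r in which Q^{−1}δ ≤ g ≤ Qδ and |∂g| ≤ Q. Then for every C²-function f : M → ℝ bounded above, there exists a sequence of points p_k ∈ M with f(p_k) → sup_M f, |∇f(p_k)|_g → 0, and limsup_k Δ_g f(p_k) ≤ 0. -/
/-!
Instead of the cutoff `F / φ_k`, we penalise inside one chart. Fix `λ > 0`, put `ρ = r / (2Q)`
and pick `x` with `f x > sup f - λρ²`. In the chart at `x` (with `φ x = 0`), the image contains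
the Euclidean ball of radius `r / Q`: by completeness and the bi-Lipschitz bound the image is
relatively closed in that ball, and it is open. So `u z - λ|z|²`, `u = f ∘ ψ`, attains its
maximum over the closed ball of radius `ρ`, and as `u ≤ sup f` the maximiser `p` satisfies
`λ|p|² < λρ²`: it is an interior local maximum. There `∂u(p) = 2λp` and `D²u(p) ≤ 2λ`, and
`0 ≤ g⁻¹ ≤ Q` gives `|∇f|² = 4λ²⟨p, g⁻¹p⟩ ≤ 4λ²Qρ²` and `Δf = tr (g⁻¹ D²u) ≤ 2λ d Q`.
Take `λ = 1 / (k + 1)`.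
-/

open Set Filter

/-- Partial derivative of a function on `ℝ^d` in the `i`-th coordinate direction. -/
noncomputable def pd {d : ℕ} (i : Fin d) (f : (Fin d → ℝ) → ℝ) (x : Fin d → ℝ) : ℝ :=
  fderiv ℝ f x (Pi.single i 1)

open Topology Metric Matrix

namespace Matrix
variable {n : Type*} [Fintype n]

theorem PosSemidef.trace_mul_nonneg {A B : Matrix n n ℝ} (hA : A.PosSemidef)
    (hB : B.PosSemidef) : 0 ≤ (A * B).trace := by
  classical
  open scoped MatrixOrder in
  obtain ⟨C, rfl⟩ := CStarAlgebra.nonneg_iff_eq_star_mul_self.mp hA.nonneg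
  rw [star_eq_conjTranspose, Matrix.mul_assoc, trace_mul_comm]
  exact (hB.mul_mul_conjTranspose_same C).trace_nonneg

theorem trace_mul_le_of_dotProduct_mulVec_le {A H : Matrix n n ℝ} {c : ℝ}
    (hA : ∀ v, 0 ≤ v ⬝ᵥ A *ᵥ v) (hH : H.IsSymm) (hHc : ∀ v, v ⬝ᵥ H *ᵥ v ≤ c * (v ⬝ᵥ v)) :
    (A * H).trace ≤ c * A.trace := by
  classical
  -- `A` need not be symmetric; only its symmetric part enters `tr (A H)`.
  have hP : (A + Aᵀ).PosSemidef := by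
    refine posSemidef_iff_dotProduct_mulVec.mpr ⟨by simp [IsHermitian, add_comm], fun v => ?_⟩
    have hT : v ⬝ᵥ Aᵀ *ᵥ v = v ⬝ᵥ A *ᵥ v := by
      rw [mulVec_transpose, dotProduct_comm, dotProduct_mulVec]
    simpa [add_mulVec, dotProduct_add, hT] using add_nonneg (hA v) (hA v)
  have hN : (c • 1 - H).PosSemidef := by
    refine posSemidef_iff_dotProduct_mulVec.mpr ⟨?_, fun v => ?_⟩
    · simp [IsHermitian, hH.eq]
    · simpa [sub_mulVec, dotProduct_sub, smul_mulVec] using hHc v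
  have h := hP.trace_mul_nonneg hN
  have hAH : (Aᵀ * H).trace = (A * H).trace := by
    rw [← trace_transpose, transpose_mul, transpose_transpose, hH.eq, trace_mul_comm]
  rw [Matrix.mul_sub, trace_sub, Matrix.mul_smul, Matrix.mul_one, trace_smul, Matrix.add_mul,
    trace_add, trace_add, hAH, trace_transpose, smul_eq_mul] at h
  linarith

theorem dotProduct_mulVec_bounds_of_mul_eq_one [DecidableEq n] {G A : Matrix n n ℝ} {c : ℝ}
    (hc : 0 < c) (hGA : G * A = 1) (hG : ∀ v, c * (v ⬝ᵥ v) ≤ v ⬝ᵥ G *ᵥ v) (v : n → ℝ) :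
    0 ≤ v ⬝ᵥ A *ᵥ v ∧ v ⬝ᵥ A *ᵥ v ≤ c⁻¹ * (v ⬝ᵥ v) := by
  set w := A *ᵥ v
  have hGw : G *ᵥ w = v := by simp [w, mulVec_mulVec, hGA]
  have hvw : c * (w ⬝ᵥ w) ≤ v ⬝ᵥ w := by
    simpa [← hGw, dotProduct_comm (G *ᵥ w)] using hG w
  have hww : 0 ≤ w ⬝ᵥ w := dotProduct_self_star_nonneg w
  have hsq : 0 ≤ (v - c • w) ⬝ᵥ (v - c • w) := dotProduct_self_star_nonneg _
  simp only [sub_dotProduct, dotProduct_sub, smul_dotProduct, dotProduct_smul, smul_eq_mul,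
    dotProduct_comm w v] at hsq
  refine ⟨by nlinarith, ?_⟩
  rw [le_inv_mul_iff₀ hc]
  nlinarith

theorem trace_le_of_dotProduct_mulVec_le {A : Matrix n n ℝ} {c : ℝ}
    (hA : ∀ v, v ⬝ᵥ A *ᵥ v ≤ c * (v ⬝ᵥ v)) : A.trace ≤ Fintype.card n * c := by
  classical
  calc A.trace = ∑ i, A i i := rfl
    _ ≤ ∑ _i : n, c := Finset.sum_le_sum fun i _ => by simpa using hA (Pi.single i 1)
    _ = Fintype.card n * c := by simp

theorem sum_sum_mul_mul_eq_dotProduct_mulVec (A : Matrix n n ℝ) (v : n → ℝ) :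
    ∑ i, ∑ j, v i * A i j * v j = v ⬝ᵥ A *ᵥ v := by
  simp [dotProduct, mulVec, Finset.mul_sum, mul_assoc]

theorem sum_sq_eq_dotProduct (v : n → ℝ) : ∑ i, v i ^ 2 = v ⬝ᵥ v := by
  simp [dotProduct, sq]

end Matrix

section
variable {𝕜 E F : Type*} [NontriviallyNormedField 𝕜] [NormedAddCommGroup E] [NormedSpace 𝕜 E]
  [NormedAddCommGroup F] [NormedSpace 𝕜 F]

theorem ContinuousLinearMap.hasFDerivAt_apply_self (B : E →L[𝕜] E →L[𝕜] F) (z : E) :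
    HasFDerivAt (fun z => B z z) (B z + B.flip z) z := by
  simpa using B.hasFDerivAt.clm_apply (hasFDerivAt_id z)

end

theorem IsLocalMax.secondDeriv_nonpos {h h' : ℝ → ℝ} {a c : ℝ} (hmax : IsLocalMax h a)
    (hh : ∀ᶠ t in 𝓝 a, HasDerivAt h (h' t) t) (hh' : HasDerivAt h' c a) : c ≤ 0 := by
  by_contra! hc
  have hderiv : deriv h =ᶠ[𝓝 a] h' := hh.mono fun t ht => ht.deriv
  have hmin : IsLocalMin h a := isLocalMin_of_deriv_deriv_pos
    (by rwa [hderiv.deriv_eq, hh'.deriv]) hmax.deriv_eq_zero hh.self_of_nhds.continuousAt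
  have hconst : h =ᶠ[𝓝 a] fun _ => h a :=
    (hmin.and hmax).mono fun t ht => le_antisymm ht.2 ht.1
  have hzero : h' =ᶠ[𝓝 a] fun _ => 0 := hderiv.symm.trans (by simpa using hconst.deriv)
  exact hc.ne' ((hh'.congr_of_eventuallyEq hzero.symm).unique (hasDerivAt_const a 0))

section
variable {E : Type*} [NormedAddCommGroup E] [NormedSpace ℝ E] {p : E} {B : E →L[ℝ] E →L[ℝ] ℝ}
  {u : E → ℝ} {Du : E → E →L[ℝ] ℝ} {D2 : E →L[ℝ] E →L[ℝ] ℝ}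

theorem IsLocalMax.secondFDeriv_apply_self_nonpos {F : E → ℝ} {F' : E → E →L[ℝ] ℝ}
    {F'' : E →L[ℝ] E →L[ℝ] ℝ} (hmax : IsLocalMax F p)
    (hF : ∀ᶠ z in 𝓝 p, HasFDerivAt F (F' z) z) (hF' : HasFDerivAt F' F'' p) (v : E) :
    F'' v v ≤ 0 := by
  set L : ℝ → E := fun t => p + t • v
  have hL : ∀ t, HasDerivAt L v t := fun t => by
    have := ((hasDerivAt_id' t).smul_const v).const_add p
    rwa [one_smul] at this
  have hL0 : L 0 = p := by simp [L]
  refine IsLocalMax.secondDeriv_nonpos (h := F ∘ L) (h' := fun t => F' (L t) v) (a := 0)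
    ((hL0 ▸ hmax).comp_continuous (hL 0).continuousAt) ?_ ?_
  · have hLt : Tendsto L (𝓝 0) (𝓝 p) := hL0 ▸ (hL 0).continuousAt.tendsto
    filter_upwards [hLt.eventually hF] with t ht using ht.comp_hasDerivAt t (hL t)
  · have hF'v : HasFDerivAt (fun z => F' z v) ((ContinuousLinearMap.apply ℝ ℝ v).comp F'') (L 0) :=
      hL0 ▸ (ContinuousLinearMap.apply ℝ ℝ v).hasFDerivAt.comp p hF'
    exact hF'v.comp_hasDerivAt 0 (hL 0)

theorem IsLocalMax.hasFDerivAt_eq_add_flip (hmax : IsLocalMax (fun z => u z - B z z) p)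
    (hu : HasFDerivAt u (Du p) p) : Du p = B p + B.flip p :=
  sub_eq_zero.mp (hmax.hasFDerivAt_eq_zero (hu.sub (B.hasFDerivAt_apply_self p)))

theorem IsLocalMax.secondFDeriv_apply_self_le (hmax : IsLocalMax (fun z => u z - B z z) p)
    (hu : ∀ᶠ z in 𝓝 p, HasFDerivAt u (Du z) z) (hDu : HasFDerivAt Du D2 p) (v : E) :
    D2 v v ≤ 2 * B v v := by
  have hB : HasFDerivAt (fun z => B z + B.flip z) (B + B.flip) p := (B + B.flip).hasFDerivAt
  have := hmax.secondFDeriv_apply_self_nonpos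
    (hu.mono fun z hz => hz.sub (B.hasFDerivAt_apply_self z)) (hDu.sub hB) v
  simp only [_root_.sub_apply, _root_.add_apply, ContinuousLinearMap.flip_apply] at this
  linarith

end

theorem exists_isLocalMax_sub_of_isCompact {X : Type*} [TopologicalSpace X] {u q : X → ℝ}
    {K : Set X} {z₀ : X} {S c : ℝ} (hK : IsCompact K) (hq : Continuous q)
    (hqK : {z | q z < c} ⊆ K) (hu : ContinuousOn u K) (huS : ∀ z ∈ K, u z ≤ S)
    (hq_nonneg : ∀ z, 0 ≤ q z) (hz₀ : q z₀ = 0) (hc : 0 < c) (hu₀ : S - c < u z₀) :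
    ∃ p, q p < c ∧ S - c < u p ∧ IsLocalMax (fun z => u z - q z) p := by
  have hz₀K : z₀ ∈ K := hqK (by simp [hz₀, hc])
  obtain ⟨p, hpK, hpmax⟩ := hK.exists_isMaxOn ⟨z₀, hz₀K⟩ (hu.sub hq.continuousOn)
  have hp : u z₀ - q z₀ ≤ u p - q p := hpmax hz₀K
  have hpS := huS p hpK
  have hqp : q p < c := by linarith
  refine ⟨p, hqp, by linarith [hq_nonneg p], ?_⟩
  filter_upwards [(isOpen_lt hq continuous_const).mem_nhds hqp] with z hz using hpmax (hqK hz)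

theorem Filter.limsup_nonpos_of_eventually_le {ι : Type*} {l : Filter ι} {u v : ι → ℝ}
    (hv : Tendsto v l (𝓝 0)) (huv : u ≤ᶠ[l] v) : limsup u l ≤ 0 := by
  by_cases hu : IsCoboundedUnder (· ≤ ·) l u
  · refine le_of_forall_pos_le_add fun ε hε => ?_
    rw [zero_add]
    exact limsup_le_of_le hu (huv.trans (hv.eventually (eventually_le_nhds hε)))
  · rw [limsup_eq, Real.sInf_of_not_bddBelow (s := {a | ∀ᶠ n in l, u n ≤ a}) fun h => hu h]

section
variable {X Y : Type*} [MetricSpace X] [CompleteSpace X] [MetricSpace Y] {φ : X → Y} {x : X}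
  {r Q : ℝ}

theorem closure_image_ball_inter_ball_subset (hQ : 0 < Q) (hφ : ContinuousOn φ (ball x r))
    (hdist : ∀ y ∈ ball x r, ∀ z ∈ ball x r, dist y z ≤ Q * dist (φ y) (φ z)) :
    closure (φ '' ball x r) ∩ ball (φ x) (r / Q) ⊆ φ '' ball x r := by
  rintro z ⟨hz, hzx⟩
  obtain ⟨w, hw, hwz⟩ := mem_closure_iff_seq_limit.mp hz
  choose y hy hyw using hw
  have hx : x ∈ ball x r := mem_ball_self <|
    (div_pos_iff_of_pos_right hQ).mp (dist_nonneg.trans_lt hzx)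
  have hcauchy : CauchySeq y := by
    refine Metric.cauchySeq_iff'.mpr fun ε hε => ?_
    obtain ⟨N, hN⟩ := Metric.cauchySeq_iff'.mp hwz.cauchySeq (ε / Q) (by positivity)
    refine ⟨N, fun n hn => (hdist _ (hy n) _ (hy N)).trans_lt ?_⟩
    rw [hyw, hyw, ← lt_div_iff₀' hQ]
    exact hN n hn
  obtain ⟨p, hp⟩ := cauchySeq_tendsto_of_complete hcauchy
  have hpx : dist p x < r := by
    have hle : dist x p ≤ Q * dist (φ x) z :=
      le_of_tendsto_of_tendsto' (tendsto_const_nhds.dist hp)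
        ((tendsto_const_nhds.dist hwz).const_mul Q) fun n => hyw n ▸ hdist x hx (y n) (hy n)
    rw [mem_ball, dist_comm, lt_div_iff₀' hQ] at hzx
    rw [dist_comm]
    exact hle.trans_lt hzx
  have hφp : Tendsto (fun n => φ (y n)) atTop (𝓝 (φ p)) :=
    ((hφ.continuousAt (isOpen_ball.mem_nhds hpx)).tendsto).comp hp
  exact ⟨p, hpx, tendsto_nhds_unique hφp (by simpa only [hyw] using hwz)⟩

end

theorem ball_subset_image_ball {X E : Type*} [MetricSpace X] [CompleteSpace X]
    [NormedAddCommGroup E] [NormedSpace ℝ E] {φ : X → E} {x : X} {r Q : ℝ} (hr : 0 < r)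
    (hQ : 0 < Q) (hopen : IsOpen (φ '' ball x r)) (hφ : ContinuousOn φ (ball x r))
    (hdist : ∀ y ∈ ball x r, ∀ z ∈ ball x r, dist y z ≤ Q * dist (φ y) (φ z)) :
    ball (φ x) (r / Q) ⊆ φ '' ball x r :=
  (convex_ball _ _).isPreconnected.subset_of_closure_inter_subset hopen
    ⟨φ x, mem_ball_self (by positivity), x, mem_ball_self hr, rfl⟩
    (closure_image_ball_inter_ball_subset hQ hφ hdist)

section EuclideanCoordinates

variable {ι : Type*} [Fintype ι]

noncomputable def dotProductCLM (ι : Type*) [Fintype ι] : (ι → ℝ) →L[ℝ] (ι → ℝ) →L[ℝ] ℝ :=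
  (innerSL ℝ).bilinearComp (EuclideanSpace.equiv ι ℝ).symm.toContinuousLinearMap
    (EuclideanSpace.equiv ι ℝ).symm.toContinuousLinearMap

@[simp]
theorem dotProductCLM_apply (v w : ι → ℝ) : dotProductCLM ι v w = v ⬝ᵥ w := by
  simp [dotProductCLM, EuclideanSpace.inner_eq_star_dotProduct, dotProduct_comm]

theorem EuclideanSpace.norm_toLp_sq (v : ι → ℝ) : ‖WithLp.toLp 2 v‖ ^ 2 = v ⬝ᵥ v := by
  rw [EuclideanSpace.norm_eq, Real.sq_sqrt (by positivity)]
  simp [dotProduct, sq]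

theorem EuclideanSpace.dist_toLp (a b : ι → ℝ) :
    dist (WithLp.toLp 2 a) (WithLp.toLp 2 b) = √(∑ i, (a i - b i) ^ 2) := by
  simp [EuclideanSpace.dist_eq, Real.dist_eq, sq_abs]

theorem EuclideanSpace.isCompact_setOf_norm_toLp_le (ρ : ℝ) :
    IsCompact {z : ι → ℝ | ‖WithLp.toLp 2 z‖ ≤ ρ} := by
  simpa [Set.preimage, mem_closedBall_zero_iff] using
    (EuclideanSpace.equiv ι ℝ).symm.toHomeomorph.isCompact_preimage.mpr (isCompact_closedBall 0 ρ)

theorem ContinuousLinearMap.apply_apply_eq_dotProduct_mulVec [DecidableEq ι]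
    (B : (ι → ℝ) →L[ℝ] (ι → ℝ) →L[ℝ] ℝ) (v w : ι → ℝ) :
    B v w = v ⬝ᵥ (Matrix.of fun i j => B (Pi.single i 1) (Pi.single j 1)) *ᵥ w := by
  have h := LinearMap.congr_fun₂ (Matrix.toLinearMap₂'_toMatrix' (R := ℝ)
    ((ContinuousLinearMap.coeLM ℝ).comp B.toLinearMap)) v w
  rw [Matrix.toLinearMap₂'_apply'] at h
  exact h.symm

end EuclideanCoordinates

section Coordinates

variable {d : ℕ}

noncomputable def coordHessian (u : (Fin d → ℝ) → ℝ) (p : Fin d → ℝ) :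
    Matrix (Fin d) (Fin d) ℝ :=
  Matrix.of fun i j => pd i (fun z => pd j u z) p

theorem coordHessian_eq_of_differentiableAt {u : (Fin d → ℝ) → ℝ} {p : Fin d → ℝ}
    (h : DifferentiableAt ℝ (fderiv ℝ u) p) :
    coordHessian u p =
      Matrix.of fun i j => fderiv ℝ (fderiv ℝ u) p (Pi.single i 1) (Pi.single j 1) := by
  ext i j
  change fderiv ℝ (fun z => fderiv ℝ u z (Pi.single j 1)) p (Pi.single i 1) = _
  rw [fderiv_clm_apply h (differentiableAt_const _)]
  simp

theorem IsLocalMax.pd_eq_and_coordHessian_le {u : (Fin d → ℝ) → ℝ} {U : Set (Fin d → ℝ)}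
    {p : Fin d → ℝ} {lam : ℝ} (hU : IsOpen U) (hp : p ∈ U) (hu : ContDiffOn ℝ 2 u U)
    (hmax : IsLocalMax (fun z => u z - lam * (z ⬝ᵥ z)) p) :
    (∀ j, pd j u p = 2 * lam * p j) ∧ (coordHessian u p).IsSymm ∧
      ∀ v, v ⬝ᵥ coordHessian u p *ᵥ v ≤ 2 * lam * (v ⬝ᵥ v) := by
  set B := lam • dotProductCLM (Fin d)
  have hmaxB : IsLocalMax (fun z => u z - B z z) p := by simpa [B] using hmax
  have hdiff : ∀ᶠ z in 𝓝 p, HasFDerivAt u (fderiv ℝ u z) z :=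
    eventually_of_mem (hU.mem_nhds hp) fun z hz =>
      ((hu.differentiableOn (by norm_num)).differentiableAt (hU.mem_nhds hz)).hasFDerivAt
  have hD : HasFDerivAt (fderiv ℝ u) (fderiv ℝ (fderiv ℝ u) p) p :=
    (((hu.fderiv_of_isOpen hU (by norm_num)).differentiableOn one_ne_zero).differentiableAt
      (hU.mem_nhds hp)).hasFDerivAt
  have hfirst := hmaxB.hasFDerivAt_eq_add_flip hdiff.self_of_nhds
  have hsymm := second_derivative_symmetric_of_eventually hdiff hD
  rw [coordHessian_eq_of_differentiableAt hD.differentiableAt]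
  refine ⟨fun j => ?_, ?_, fun v => ?_⟩
  · simp only [pd, hfirst, B, _root_.add_apply, _root_.smul_apply, ContinuousLinearMap.flip_apply,
      dotProductCLM_apply, dotProduct_single, single_dotProduct, mul_one, one_mul, smul_eq_mul]
    ring
  · ext i j
    simp [hsymm]
  · rw [← ContinuousLinearMap.apply_apply_eq_dotProduct_mulVec]
    simpa [B, mul_assoc] using hmaxB.secondFDeriv_apply_self_le hdiff hD v

theorem exists_penalized_max {u : (Fin d → ℝ) → ℝ} {U : Set (Fin d → ℝ)} {S lam ρ : ℝ}
    (hlam : 0 < lam) (hρ : 0 < ρ) (hU : IsOpen U) (hρU : {z | ‖WithLp.toLp 2 z‖ ≤ ρ} ⊆ U)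
    (hu : ContDiffOn ℝ 2 u U) (huS : ∀ z ∈ U, u z ≤ S) (hu₀ : S - lam * ρ ^ 2 < u 0) :
    ∃ p ∈ U, p ⬝ᵥ p < ρ ^ 2 ∧ S - lam * ρ ^ 2 < u p ∧ (∀ j, pd j u p = 2 * lam * p j) ∧
      (coordHessian u p).IsSymm ∧ ∀ v, v ⬝ᵥ coordHessian u p *ᵥ v ≤ 2 * lam * (v ⬝ᵥ v) := by
  have hsub : {z : Fin d → ℝ | lam * (z ⬝ᵥ z) < lam * ρ ^ 2} ⊆ {z | ‖WithLp.toLp 2 z‖ ≤ ρ} := by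
    intro z (hz : lam * (z ⬝ᵥ z) < lam * ρ ^ 2)
    rw [← EuclideanSpace.norm_toLp_sq z, mul_lt_mul_iff_right₀ hlam,
      pow_lt_pow_iff_left₀ (norm_nonneg _) hρ.le two_ne_zero] at hz
    exact hz.le
  obtain ⟨p, hpq, hpu, hmax⟩ := exists_isLocalMax_sub_of_isCompact
    (z₀ := 0) (EuclideanSpace.isCompact_setOf_norm_toLp_le ρ)
    (continuous_const.mul (continuous_id.dotProduct continuous_id)) hsub (hu.continuousOn.mono hρU)
    (fun z hz => huS z (hρU hz)) (fun z => mul_nonneg hlam.le (dotProduct_self_star_nonneg z))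
    (by simp) (by positivity) hu₀
  have hpU : p ∈ U := hρU (hsub hpq)
  exact ⟨p, hpU, lt_of_mul_lt_mul_left hpq hlam.le, hpu,
    hmax.pd_eq_and_coordHessian_le hU hpU hu⟩

theorem norm_toLp_lt_subset_image_ball {M : Type*} [MetricSpace M] [CompleteSpace M]
    {φ : M → (Fin d → ℝ)} {x : M} {r Q : ℝ} (hr : 0 < r) (hQ : 0 < Q) (hφx : φ x = 0)
    (hopen : IsOpen (φ '' ball x r))
    (hbilip : ∀ y ∈ ball x r, ∀ z ∈ ball x r,
      Q⁻¹ * √(∑ i, (φ y i - φ z i) ^ 2) ≤ dist y z ∧ dist y z ≤ Q * √(∑ i, (φ y i - φ z i) ^ 2)) :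
    {z | ‖WithLp.toLp 2 z‖ < r / Q} ⊆ φ '' ball x r := by
  set φE : M → EuclideanSpace ℝ (Fin d) := fun y => WithLp.toLp 2 (φ y)
  have hdist : ∀ y ∈ ball x r, ∀ z ∈ ball x r,
      Q⁻¹ * dist (φE y) (φE z) ≤ dist y z ∧ dist y z ≤ Q * dist (φE y) (φE z) := by
    simpa only [φE, EuclideanSpace.dist_toLp] using hbilip
  have hcont : ContinuousOn φE (ball x r) := by
    refine (LipschitzOnWith.of_dist_le_mul (K := Q.toNNReal) fun y hy z hz => ?_).continuousOn
    rw [Real.coe_toNNReal _ hQ.le, ← inv_mul_le_iff₀ hQ]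
    exact (hdist y hy z hz).1
  have hopenE : IsOpen (φE '' ball x r) := by
    rw [← image_image (WithLp.toLp 2)]
    exact (EuclideanSpace.equiv (Fin d) ℝ).symm.toHomeomorph.isOpenMap _ hopen
  intro z hz
  obtain ⟨y, hy, hyz⟩ := ball_subset_image_ball hr hQ hopenE hcont
    (fun y hy z hz => (hdist y hy z hz).2) (by simpa [φE, hφx] using hz)
  exact ⟨y, hy, WithLp.toLp_injective 2 hyz⟩

theorem exists_near_sup_of_chart {M : Type*} [MetricSpace M] [CompleteSpace M]
    {r Q lam S : ℝ} (hr : 0 < r) (hQ : 0 < Q) (hlam : 0 < lam) {f lapf gradf2 : M → ℝ}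
    (hfS : ∀ y, f y ≤ S) {x : M} (hx : S - lam * (r / (2 * Q)) ^ 2 < f x)
    {φ : M → (Fin d → ℝ)} {ψ : (Fin d → ℝ) → M} {G Ginv : (Fin d → ℝ) → Fin d → Fin d → ℝ}
    (hφx : φ x = 0) (hopen : IsOpen (φ '' ball x r)) (hψφ : ∀ y ∈ ball x r, ψ (φ y) = y)
    (hbilip : ∀ y ∈ ball x r, ∀ z ∈ ball x r,
      Q⁻¹ * √(∑ i, (φ y i - φ z i) ^ 2) ≤ dist y z ∧ dist y z ≤ Q * √(∑ i, (φ y i - φ z i) ^ 2))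
    (hGGinv : ∀ z ∈ φ '' ball x r, ∀ i j,
      (∑ k, G z i k * Ginv z k j) = if i = j then 1 else 0)
    (hG : ∀ z ∈ φ '' ball x r, ∀ v : Fin d → ℝ,
      Q⁻¹ * (∑ i, (v i) ^ 2) ≤ (∑ i, ∑ j, v i * G z i j * v j))
    (hf : ContDiffOn ℝ 2 (f ∘ ψ) (φ '' ball x r))
    (hlapf : ∀ y ∈ ball x r,
      lapf y = ∑ i, ∑ j, Ginv (φ y) i j * pd i (fun z => pd j (f ∘ ψ) z) (φ y))
    (hgradf2 : ∀ y ∈ ball x r,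
      gradf2 y = ∑ i, ∑ j, Ginv (φ y) i j * pd i (f ∘ ψ) (φ y) * pd j (f ∘ ψ) (φ y)) :
    ∃ p, S - lam * (r / (2 * Q)) ^ 2 < f p ∧ 0 ≤ gradf2 p ∧
      gradf2 p ≤ 4 * lam ^ 2 * Q * (r / (2 * Q)) ^ 2 ∧ lapf p ≤ 2 * lam * (d * Q) := by
  set ρ := r / (2 * Q)
  have hρ : 0 < ρ := by positivity
  have hρQ : ρ < r / Q := div_lt_div_of_pos_left hr hQ (by linarith)
  have hball : {z | ‖WithLp.toLp 2 z‖ ≤ ρ} ⊆ φ '' ball x r := fun z (hz : _ ≤ ρ) =>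
    norm_toLp_lt_subset_image_ball hr hQ hφx hopen hbilip (hz.trans_lt hρQ)
  have huS : ∀ z ∈ φ '' ball x r, (f ∘ ψ) z ≤ S := by
    rintro _ ⟨y, hy, rfl⟩
    simpa [hψφ y hy] using hfS y
  have hu₀ : S - lam * ρ ^ 2 < (f ∘ ψ) 0 := by
    simpa [← hφx, hψφ x (mem_ball_self hr)] using hx
  obtain ⟨_, ⟨y, hy, rfl⟩, hpρ, hpS, hpd, hHsymm, hHle⟩ :=
    exists_penalized_max hlam hρ hopen hball hf huS hu₀
  set A : Matrix (Fin d) (Fin d) ℝ := Ginv (φ y)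
  have hA : ∀ v, 0 ≤ v ⬝ᵥ A *ᵥ v ∧ v ⬝ᵥ A *ᵥ v ≤ Q * (v ⬝ᵥ v) := by
    set Gy : Matrix (Fin d) (Fin d) ℝ := G (φ y)
    have hGA : Gy * A = 1 := by
      ext i j
      simpa [mul_apply, one_apply] using hGGinv _ (mem_image_of_mem φ hy) i j
    simpa using dotProduct_mulVec_bounds_of_mul_eq_one (inv_pos.mpr hQ) hGA fun v => by
      have h := hG _ (mem_image_of_mem φ hy) v
      rwa [Matrix.sum_sq_eq_dotProduct, Matrix.sum_sum_mul_mul_eq_dotProduct_mulVec (G (φ y))] at h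
  have hgrad : gradf2 y = 4 * lam ^ 2 * (φ y ⬝ᵥ A *ᵥ φ y) := by
    rw [hgradf2 y hy, ← Matrix.sum_sum_mul_mul_eq_dotProduct_mulVec, Finset.mul_sum]
    simp_rw [hpd, Finset.mul_sum]
    exact Finset.sum_congr rfl fun i _ => Finset.sum_congr rfl fun j _ => by ring
  have hlap : lapf y = (A * coordHessian (f ∘ ψ) (φ y)).trace := by
    rw [hlapf y hy]
    refine Finset.sum_congr rfl fun i _ => Finset.sum_congr rfl fun j _ => ?_
    change _ = A i j * coordHessian (f ∘ ψ) (φ y) j i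
    rw [hHsymm.apply]
    rfl
  refine ⟨y, by simpa [hψφ y hy] using hpS, ?_, ?_, ?_⟩
  · rw [hgrad]
    exact mul_nonneg (by positivity) (hA _).1
  · rw [hgrad]
    calc 4 * lam ^ 2 * (φ y ⬝ᵥ A *ᵥ φ y) ≤ 4 * lam ^ 2 * (Q * (φ y ⬝ᵥ φ y)) := by
          gcongr; exact (hA _).2
      _ ≤ 4 * lam ^ 2 * Q * ρ ^ 2 := by rw [← mul_assoc]; gcongr
  · rw [hlap]
    calc (A * coordHessian (f ∘ ψ) (φ y)).trace ≤ 2 * lam * A.trace :=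
          trace_mul_le_of_dotProduct_mulVec_le (fun v => (hA v).1) hHsymm hHle
      _ ≤ 2 * lam * (d * Q) := by
          gcongr
          simpa using trace_le_of_dotProduct_mulVec_le fun v => (hA v).2

end Coordinates

theorem cheng_yau_maximum_principle_general (d : ℕ)
    (M : Type*) [MetricSpace M] [CompleteSpace M] [Nonempty M]
    (r Q : ℝ) (hr : 0 < r) (hQ : 1 < Q)
    (f lapf gradf2 : M → ℝ)
    (hbdd : BddAbove (range f))
    (hcharts : ∀ x : M,
      ∃ (φ : M → (Fin d → ℝ)) (ψ : (Fin d → ℝ) → M)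
        (G Ginv : (Fin d → ℝ) → Fin d → Fin d → ℝ),
        φ x = 0 ∧
        InjOn φ (Metric.ball x r) ∧
        IsOpen (φ '' Metric.ball x r) ∧
        (∀ y ∈ Metric.ball x r, ψ (φ y) = y) ∧
        -- the coordinates are bi-Lipschitz compatible with the Riemannian distance
        (∀ y ∈ Metric.ball x r, ∀ z ∈ Metric.ball x r,
          Q⁻¹ * Real.sqrt (∑ i, (φ y i - φ z i) ^ 2) ≤ dist y z ∧
          dist y z ≤ Q * Real.sqrt (∑ i, (φ y i - φ z i) ^ 2)) ∧
        -- the metric coefficients are smooth, `Q`-controlled with `Q`-bounded derivatives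
        (∀ i j, ContDiffOn ℝ 1 (fun z => G z i j) (φ '' Metric.ball x r)) ∧
        (∀ z ∈ φ '' Metric.ball x r, ∀ i j,
          (∑ k, G z i k * Ginv z k j) = if i = j then 1 else 0) ∧
        (∀ z ∈ φ '' Metric.ball x r, ∀ v : Fin d → ℝ,
          Q⁻¹ * (∑ i, (v i) ^ 2) ≤ (∑ i, ∑ j, v i * G z i j * v j) ∧
          (∑ i, ∑ j, v i * G z i j * v j) ≤ Q * (∑ i, (v i) ^ 2)) ∧
        (∀ z ∈ φ '' Metric.ball x r, ∀ l i j, |pd l (fun y => G y i j) z| ≤ Q) ∧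
        -- the coordinates are harmonic: `∂_i (√det g · g^{ij}) = 0`
        (∀ z ∈ φ '' Metric.ball x r, ∀ j : Fin d,
          (∑ i, pd i (fun y => Real.sqrt (Matrix.det (Matrix.of fun a b => G y a b)) *
            Ginv y i j) z) = 0) ∧
        -- `f` is `C²` in these coordinates, and `Δf`, `|∇f|²` have their coordinate expressions
        ContDiffOn ℝ 2 (f ∘ ψ) (φ '' Metric.ball x r) ∧
        (∀ y ∈ Metric.ball x r,
          lapf y = ∑ i, ∑ j, Ginv (φ y) i j * pd i (fun z => pd j (f ∘ ψ) z) (φ y) ∧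
          gradf2 y = ∑ i, ∑ j, Ginv (φ y) i j * pd i (f ∘ ψ) (φ y) * pd j (f ∘ ψ) (φ y))) :
    ∃ p : ℕ → M,
      Tendsto (fun k => f (p k)) atTop (nhds (sSup (range f))) ∧
      Tendsto (fun k => gradf2 (p k)) atTop (nhds 0) ∧
      limsup (fun k => lapf (p k)) atTop ≤ 0 := by
  have hQ0 : 0 < Q := one_pos.trans hQ
  set S := sSup (range f)
  set ρ := r / (2 * Q)
  have key : ∀ lam > 0, ∃ p, S - lam * ρ ^ 2 < f p ∧ 0 ≤ gradf2 p ∧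
      gradf2 p ≤ 4 * lam ^ 2 * Q * ρ ^ 2 ∧ lapf p ≤ 2 * lam * (d * Q) := by
    intro lam hlam
    obtain ⟨_, ⟨x, rfl⟩, hx⟩ := exists_lt_of_lt_csSup (range_nonempty f)
      (sub_lt_self S (by positivity : 0 < lam * ρ ^ 2))
    obtain ⟨φ, ψ, G, Ginv, hφx, -, hopen, hψφ, hbilip, -, hGGinv, hG, -, -, hf, hform⟩ :=
      hcharts x
    exact exists_near_sup_of_chart hr hQ0 hlam (fun y => le_csSup hbdd ⟨y, rfl⟩) hx hφx hopen
      hψφ hbilip hGGinv (fun z hz v => (hG z hz v).1) hf (fun y hy => (hform y hy).1)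
      (fun y hy => (hform y hy).2)
  choose p hp using fun k : ℕ => key (1 / ((k : ℝ) + 1)) Nat.one_div_pos_of_nat
  have hlam : Tendsto (fun k : ℕ => 1 / ((k : ℝ) + 1)) atTop (𝓝 0) :=
    tendsto_one_div_add_atTop_nhds_zero_nat
  refine ⟨p, ?_, ?_, ?_⟩
  · refine tendsto_of_tendsto_of_tendsto_of_le_of_le ?_ tendsto_const_nhds (fun k => (hp k).1.le)
      fun k => le_csSup hbdd ⟨p k, rfl⟩
    simpa using tendsto_const_nhds.sub (hlam.mul_const (ρ ^ 2))
  · refine tendsto_of_tendsto_of_tendsto_of_le_of_le tendsto_const_nhds ?_ (fun k => (hp k).2.1)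
      fun k => (hp k).2.2.1
    simpa using (((hlam.pow 2).const_mul 4).mul_const Q).mul_const (ρ ^ 2)
  · refine Filter.limsup_nonpos_of_eventually_le ?_ (Eventually.of_forall fun k => (hp k).2.2.2)
    simpa using (hlam.const_mul 2).mul_const (d * Q)

/-- **Cheng–Yau maximum principle from a uniform harmonic radius.** Let `(M, g)` be a complete
Riemannian manifold such that every point admits harmonic coordinates on the geodesic ball of
radius `r` in which `Q⁻¹ δ ≤ g ≤ Q δ` and `|∂g| ≤ Q`.  Then for every `C²` function
`f : M → ℝ` bounded above there is a sequence `p_k` with `f(p_k) → sup f`,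
`|∇f(p_k)| → 0` and `limsup Δf(p_k) ≤ 0`. -/
theorem cheng_yau_maximum_principle (d : ℕ) (hd : 0 < d)
    (M : Type*) [MetricSpace M] [CompleteSpace M] [Nonempty M]
    (r Q : ℝ) (hr : 0 < r) (hQ : 1 < Q)
    (f lapf gradf2 : M → ℝ)
    (hbdd : BddAbove (range f))
    (hcharts : ∀ x : M,
      ∃ (φ : M → (Fin d → ℝ)) (ψ : (Fin d → ℝ) → M)
        (G Ginv : (Fin d → ℝ) → Fin d → Fin d → ℝ),
        φ x = 0 ∧
        InjOn φ (Metric.ball x r) ∧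
        IsOpen (φ '' Metric.ball x r) ∧
        (∀ y ∈ Metric.ball x r, ψ (φ y) = y) ∧
        -- the coordinates are bi-Lipschitz compatible with the Riemannian distance
        (∀ y ∈ Metric.ball x r, ∀ z ∈ Metric.ball x r,
          Q⁻¹ * Real.sqrt (∑ i, (φ y i - φ z i) ^ 2) ≤ dist y z ∧
          dist y z ≤ Q * Real.sqrt (∑ i, (φ y i - φ z i) ^ 2)) ∧
        -- the metric coefficients are smooth, `Q`-controlled with `Q`-bounded derivatives
        (∀ i j, ContDiffOn ℝ 1 (fun z => G z i j) (φ '' Metric.ball x r)) ∧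
        (∀ z ∈ φ '' Metric.ball x r, ∀ i j,
          (∑ k, G z i k * Ginv z k j) = if i = j then 1 else 0) ∧
        (∀ z ∈ φ '' Metric.ball x r, ∀ v : Fin d → ℝ,
          Q⁻¹ * (∑ i, (v i) ^ 2) ≤ (∑ i, ∑ j, v i * G z i j * v j) ∧
          (∑ i, ∑ j, v i * G z i j * v j) ≤ Q * (∑ i, (v i) ^ 2)) ∧
        (∀ z ∈ φ '' Metric.ball x r, ∀ l i j, |pd l (fun y => G y i j) z| ≤ Q) ∧
        -- the coordinates are harmonic: `∂_i (√det g · g^{ij}) = 0`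
        (∀ z ∈ φ '' Metric.ball x r, ∀ j : Fin d,
          (∑ i, pd i (fun y => Real.sqrt (Matrix.det (Matrix.of fun a b => G y a b)) *
            Ginv y i j) z) = 0) ∧
        -- `f` is `C²` in these coordinates, and `Δf`, `|∇f|²` have their coordinate expressions
        ContDiffOn ℝ 2 (f ∘ ψ) (φ '' Metric.ball x r) ∧
        (∀ y ∈ Metric.ball x r,
          lapf y = ∑ i, ∑ j, Ginv (φ y) i j * pd i (fun z => pd j (f ∘ ψ) z) (φ y) ∧
          gradf2 y = ∑ i, ∑ j, Ginv (φ y) i j * pd i (f ∘ ψ) (φ y) * pd j (f ∘ ψ) (φ y))) :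
    ∃ p : ℕ → M,
      Tendsto (fun k => f (p k)) atTop (nhds (sSup (range f))) ∧
      Tendsto (fun k => gradf2 (p k)) atTop (nhds 0) ∧
      limsup (fun k => lapf (p k)) atTop ≤ 0 :=
  cheng_yau_maximum_principle_general d M r Q hr hQ f lapf gradf2 hbdd hcharts
end

section
/- Let (M, g) be a complete manifold with an essential subset K, so that outside a δ-neighborhood Ω_δ of M∖K the signed distance s to Y = ∂K gives Ω_{2δ} ≅ (−2δ, ∞) × Y, with sec_g < 0 on Ω_{2δ} and the second fundamental form S of the level sets Y_s positive definite. Then there is no closed geodesic lying entirely in Ω_δ. -/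
open scoped BigOperators

/-- Christoffel symbols `Γ^k_{ij}` of a metric `g` with inverse `ginv`, in coordinates. -/
noncomputable def christoffel {d : ℕ} (g ginv : (Fin d → ℝ) → Fin d → Fin d → ℝ)
    (x : Fin d → ℝ) (k i j : Fin d) : ℝ :=
  (1/2) * ∑ l, ginv x k l *
    (pd i (fun y => g y l j) x + pd j (fun y => g y l i) x - pd l (fun y => g y i j) x)

/-- Covariant Hessian `Hess_{ij} f = ∂_i ∂_j f - Γ^k_{ij} ∂_k f`. -/
noncomputable def hess {d : ℕ} (g ginv : (Fin d → ℝ) → Fin d → Fin d → ℝ)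
    (f : (Fin d → ℝ) → ℝ) (x : Fin d → ℝ) (i j : Fin d) : ℝ :=
  pd i (fun y => pd j f y) x - ∑ k, christoffel g ginv x k i j * pd k f x

/-- Laplace–Beltrami operator `Δ f = g^{ij} Hess_{ij} f`. -/
noncomputable def lap {d : ℕ} (g ginv : (Fin d → ℝ) → Fin d → Fin d → ℝ)
    (f : (Fin d → ℝ) → ℝ) (x : Fin d → ℝ) : ℝ :=
  ∑ i, ∑ j, ginv x i j * hess g ginv f x i j

/-- Riemann curvature tensor `R^k_{lij}`, convention `∇_i∇_j X^k - ∇_j∇_i X^k = R^k_{lij} X^l`. -/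
noncomputable def riem {d : ℕ} (g ginv : (Fin d → ℝ) → Fin d → Fin d → ℝ)
    (x : Fin d → ℝ) (k l i j : Fin d) : ℝ :=
  pd i (fun y => christoffel g ginv y k j l) x - pd j (fun y => christoffel g ginv y k i l) x
    + ∑ m, (christoffel g ginv x k i m * christoffel g ginv x m j l
        - christoffel g ginv x k j m * christoffel g ginv x m i l)

/-- Ricci tensor `Ric_{lj} = R^k_{lkj}`. -/
noncomputable def ricci {d : ℕ} (g ginv : (Fin d → ℝ) → Fin d → Fin d → ℝ)
    (x : Fin d → ℝ) (l j : Fin d) : ℝ :=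
  ∑ k, riem g ginv x k l k j

/-- Covariant derivative `∇_i T_{jk}` of a covariant 2-tensor `T`. -/
noncomputable def covD2 {d : ℕ} (g ginv : (Fin d → ℝ) → Fin d → Fin d → ℝ)
    (T : (Fin d → ℝ) → Fin d → Fin d → ℝ) (x : Fin d → ℝ) (i j k : Fin d) : ℝ :=
  pd i (fun y => T y j k) x - ∑ l, christoffel g ginv x l i j * T x l k
    - ∑ l, christoffel g ginv x l i k * T x j l

/-- `g` is a smooth Riemannian metric with pointwise inverse `ginv`. -/
def IsMetricWithInv {d : ℕ} (g ginv : (Fin d → ℝ) → Fin d → Fin d → ℝ) : Prop :=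
  (∀ i j, ContDiff ℝ (⊤ : ℕ∞) (fun x => g x i j)) ∧ (∀ i j, ContDiff ℝ (⊤ : ℕ∞) (fun x => ginv x i j)) ∧
  (∀ x i j, g x i j = g x j i) ∧ (∀ x i j, ginv x i j = ginv x j i) ∧
  (∀ x, ∀ v : Fin d → ℝ, v ≠ 0 → 0 < ∑ i, ∑ j, v i * g x i j * v j) ∧
  (∀ x i j, (∑ k, g x i k * ginv x k j) = if i = j then 1 else 0)

lemma clm_expand {d : ℕ} (L : (Fin d → ℝ) →L[ℝ] ℝ) (w : Fin d → ℝ) :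
    L w = ∑ i, w i * L (Pi.single i 1) := by
  have h : w = ∑ i, w i • (Pi.single i 1 : Fin d → ℝ) := by
    ext j
    simp [Finset.sum_apply, Pi.single_apply]
  nth_rewrite 1 [h]
  rw [map_sum]
  simp [smul_eq_mul]

lemma chain_deriv {d : ℕ} (h : (Fin d → ℝ) → ℝ) (hh : ContDiff ℝ (⊤ : ℕ∞) h)
    (γ : ℝ → Fin d → ℝ) {w : Fin d → ℝ} {τ : ℝ} (hγ : HasDerivAt γ w τ) :
    HasDerivAt (fun u => h (γ u)) (∑ i, pd i h (γ τ) * w i) τ := by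
  have h1 : HasDerivAt (fun u => h (γ u)) (fderiv ℝ h (γ τ) w) τ :=
    (hh.differentiable (by simp) (γ τ)).hasFDerivAt.comp_hasDerivAt τ hγ
  convert h1 using 1
  rw [clm_expand]
  simp [pd, mul_comm]

-- algebra lemma
lemma hess_algebra {d : ℕ} (A : Fin d → Fin d → ℝ) (B : Fin d → Fin d → Fin d → ℝ)
    (c w : Fin d → ℝ) :
    ∑ i, ∑ j, w i * (A i j - ∑ k, B k i j * c k) * w j
      = ∑ i, ((∑ j, A j i * w j) * w i + c i * (-(∑ a, ∑ b, B i a b * w a * w b))) := by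
  have e1 : ∑ i, ∑ j, w i * A i j * w j = ∑ i, (∑ j, A j i * w j) * w i := by
    rw [Finset.sum_comm]
    simp only [Finset.sum_mul]
    exact Finset.sum_congr rfl fun i _ => Finset.sum_congr rfl fun j _ => by ring
  have e2 : ∑ i, ∑ j, w i * (∑ k, B k i j * c k) * w j
      = ∑ i, c i * (∑ a, ∑ b, B i a b * w a * w b) := by
    have h1 : ∀ i j : Fin d, w i * (∑ k, B k i j * c k) * w j
        = ∑ k, c k * (B k i j * w i * w j) := by
      intro i j
      rw [Finset.mul_sum, Finset.sum_mul]
      exact Finset.sum_congr rfl fun k _ => by ring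
    simp only [h1]
    calc ∑ i, ∑ j, ∑ k, c k * (B k i j * w i * w j)
        = ∑ i, ∑ k, ∑ j, c k * (B k i j * w i * w j) :=
          Finset.sum_congr rfl fun i _ => Finset.sum_comm
      _ = ∑ k, ∑ i, ∑ j, c k * (B k i j * w i * w j) := Finset.sum_comm
      _ = ∑ i, c i * (∑ a, ∑ b, B i a b * w a * w b) := by
          refine Finset.sum_congr rfl fun k _ => ?_
          rw [Finset.mul_sum]
          exact Finset.sum_congr rfl fun a _ => by rw [Finset.mul_sum]
  calc ∑ i, ∑ j, w i * (A i j - ∑ k, B k i j * c k) * w j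
      = ∑ i, ∑ j, (w i * A i j * w j - w i * (∑ k, B k i j * c k) * w j) := by
        refine Finset.sum_congr rfl fun i _ => Finset.sum_congr rfl fun j _ => by ring
    _ = (∑ i, ∑ j, w i * A i j * w j) - ∑ i, ∑ j, w i * (∑ k, B k i j * c k) * w j := by
        simp [Finset.sum_sub_distrib]
    _ = _ := by
        rw [e1, e2]
        simp [Finset.sum_add_distrib, mul_neg, sub_eq_add_neg]

/-- **No closed geodesic near infinity.** Suppose on a region `Ω` the distance-type function
`s` has positive semidefinite Hessian, and its Hessian (the second fundamental form of the
level sets of `s`) is positive definite on nonzero vectors tangent to the level sets. Then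
there is no closed (periodic, unit-speed) geodesic lying entirely in `Ω`. -/
theorem no_closed_geodesic (d : ℕ)
    (g ginv : (Fin d → ℝ) → Fin d → Fin d → ℝ) (hg : IsMetricWithInv g ginv)
    (Ω : Set (Fin d → ℝ)) (s : (Fin d → ℝ) → ℝ) (hs : ContDiff ℝ (⊤ : ℕ∞) s)
    (hHessPSD : ∀ x ∈ Ω, ∀ v : Fin d → ℝ, 0 ≤ ∑ i, ∑ j, v i * hess g ginv s x i j * v j)
    (hSFFpos : ∀ x ∈ Ω, ∀ v : Fin d → ℝ, v ≠ 0 → (∑ i, pd i s x * v i) = 0 →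
      0 < ∑ i, ∑ j, v i * hess g ginv s x i j * v j)
    (γ : ℝ → Fin d → ℝ) (hγ : ContDiff ℝ 2 γ)
    (L : ℝ) (hL : 0 < L) (hperiodic : ∀ τ, γ (τ + L) = γ τ)
    (hgeodesic : ∀ τ, ∀ k : Fin d,
      deriv (fun u => deriv (fun v => γ v k) u) τ
        + (∑ i, ∑ j, christoffel g ginv (γ τ) k i j * deriv (fun v => γ v i) τ
            * deriv (fun v => γ v j) τ) = 0)
    (hunit : ∀ τ, (∑ i, ∑ j, g (γ τ) i j * deriv (fun v => γ v i) τ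
        * deriv (fun v => γ v j) τ) = 1)
    (hrange : Set.range γ ⊆ Ω) :
    False := by
  classical
  have hγdiff : Differentiable ℝ γ := hγ.differentiable (by norm_num)
  set v : ℝ → Fin d → ℝ := deriv γ with hvdef
  have hγ' : ∀ τ, HasDerivAt γ (v τ) τ := fun τ => (hγdiff τ).hasDerivAt
  have hcomp : ∀ τ i, deriv (fun u => γ u i) τ = v τ i := fun τ i =>
    (hasDerivAt_pi.1 (hγ' τ) i).deriv
  have hγC1 : ContDiff ℝ 1 (deriv γ) := by
    have h2 : ContDiff ℝ ((1 : WithTop ℕ∞) + 1) γ := by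
      convert hγ using 2
      exact one_add_one_eq_two
    exact (contDiff_succ_iff_deriv.mp h2).2.2
  have hvdiff : Differentiable ℝ v := hγC1.differentiable one_ne_zero
  have hv' : ∀ τ, HasDerivAt v (deriv v τ) τ := fun τ => (hvdiff τ).hasDerivAt
  have hgeo : ∀ τ k, deriv v τ k
      = -(∑ i, ∑ j, christoffel g ginv (γ τ) k i j * v τ i * v τ j) := by
    intro τ k
    have h1 : (fun u => deriv (fun w => γ w k) u) = fun u => v u k := by
      funext u; exact hcomp u k
    have h2 := hgeodesic τ k
    rw [h1] at h2
    have h3 : deriv (fun u => v u k) τ = deriv v τ k := (hasDerivAt_pi.1 (hv' τ) k).deriv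
    rw [h3] at h2
    simp only [hcomp] at h2
    linarith
  have hpds : ∀ i, ContDiff ℝ (⊤ : ℕ∞) (pd i s) :=
    fun i => (hs.fderiv_right (by simp)).clm_apply contDiff_const
  set f : ℝ → ℝ := fun τ => s (γ τ) with hfdef
  set F : ℝ → ℝ := fun τ => ∑ i, pd i s (γ τ) * v τ i with hFdef
  have hf' : ∀ τ, HasDerivAt f (F τ) τ := fun τ => chain_deriv s hs γ (hγ' τ)
  set Q : ℝ → ℝ := fun τ => ∑ i, ∑ j, v τ i * hess g ginv s (γ τ) i j * v τ j with hQdef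
  have hF' : ∀ τ, HasDerivAt F (Q τ) τ := by
    intro τ
    have term : ∀ i : Fin d, HasDerivAt (fun u => pd i s (γ u) * v u i)
        ((∑ j, pd j (fun y => pd i s y) (γ τ) * v τ j) * v τ i
          + pd i s (γ τ) * deriv v τ i) τ :=
      fun i => (chain_deriv (pd i s) (hpds i) γ (hγ' τ)).mul (hasDerivAt_pi.1 (hv' τ) i)
    have hsum := HasDerivAt.fun_sum (fun i (_ : i ∈ Finset.univ) => term i)
    have heq : Q τ = ∑ i, ((∑ j, pd j (fun y => pd i s y) (γ τ) * v τ j) * v τ i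
        + pd i s (γ τ) * deriv v τ i) := by
      simp only [hQdef, hess]
      rw [hess_algebra (fun i j => pd i (fun y => pd j s y) (γ τ))
        (fun k i j => christoffel g ginv (γ τ) k i j) (fun k => pd k s (γ τ)) (v τ)]
      exact Finset.sum_congr rfl fun i _ => by rw [hgeo τ i]
    rw [heq]
    exact hsum
  have hQ0 : ∀ τ, 0 ≤ Q τ := fun τ =>
    hHessPSD (γ τ) (hrange (Set.mem_range_self τ)) (v τ)
  have hFdiff : Differentiable ℝ F := fun τ => (hF' τ).differentiableAt
  have hFmono : Monotone F := monotone_of_deriv_nonneg hFdiff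
    (fun τ => by rw [(hF' τ).deriv]; exact hQ0 τ)
  have hfper : Function.Periodic f L := fun τ => by simp only [hfdef, hperiodic τ]
  obtain ⟨τ₀, hτ₀mem, hτ₀max⟩ := isCompact_Icc.exists_isMaxOn
    (Set.nonempty_Icc.2 hL.le)
    ((hs.continuous.comp hγ.continuous).continuousOn : ContinuousOn f (Set.Icc 0 L))
  have hglobal : ∀ τ, f τ ≤ f τ₀ := by
    intro τ
    obtain ⟨y, hy, hfy⟩ := hfper.exists_mem_Ico₀ hL τ
    rw [hfy]
    exact hτ₀max (Set.mem_Icc.mpr ⟨hy.1, hy.2.le⟩)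
  have hlocmax : IsLocalMax f τ₀ := Filter.Eventually.of_forall hglobal
  have hF0 : F τ₀ = 0 := hlocmax.hasDerivAt_eq_zero (hf' τ₀)
  have hfmono : MonotoneOn f (Set.Ici τ₀) := by
    apply monotoneOn_of_deriv_nonneg (f := f) (convex_Ici τ₀)
      ((hs.continuous.comp hγ.continuous).continuousOn)
      (fun x _ => ((hf' x).differentiableAt).differentiableWithinAt)
    intro x hx
    rw [(hf' x).deriv, ← hF0]
    exact hFmono (le_of_lt (by simpa [interior_Ici] using hx))
  have hconst : ∀ x ∈ Set.Ici τ₀, f x = f τ₀ :=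
    fun x hx => le_antisymm (hglobal x) (hfmono Set.self_mem_Ici hx hx)
  have hopen : Set.Ioi τ₀ ∈ nhds (τ₀ + 1) := isOpen_Ioi.mem_nhds (by simp)
  have hfeq : f =ᶠ[nhds (τ₀ + 1)] fun _ => f τ₀ :=
    Filter.eventuallyEq_of_mem hopen (fun x hx => hconst x (Set.mem_Ici.mpr (le_of_lt hx)))
  have hFτ₁ : F (τ₀ + 1) = 0 := by
    have h := hfeq.deriv_eq
    rw [(hf' (τ₀ + 1)).deriv] at h
    simpa using h
  have hFz : ∀ x ∈ Set.Ioo τ₀ (τ₀ + 1), F x = 0 := fun x hx =>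
    le_antisymm (hFτ₁ ▸ hFmono hx.2.le) (hF0 ▸ hFmono hx.1.le)
  have hFeq : F =ᶠ[nhds (τ₀ + 2⁻¹)] fun _ => (0 : ℝ) :=
    Filter.eventuallyEq_of_mem (isOpen_Ioo.mem_nhds ⟨by norm_num, by norm_num⟩) hFz
  have hQτs : Q (τ₀ + 2⁻¹) = 0 := by
    have h := hFeq.deriv_eq
    rw [(hF' (τ₀ + 2⁻¹)).deriv] at h
    simpa using h
  have hvne : v (τ₀ + 2⁻¹) ≠ 0 := by
    intro h0
    have h := hunit (τ₀ + 2⁻¹)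
    simp only [hcomp, h0, Pi.zero_apply, mul_zero, Finset.sum_const_zero] at h
    exact zero_ne_one h
  have htang : (∑ i, pd i s (γ (τ₀ + 2⁻¹)) * v (τ₀ + 2⁻¹) i) = 0 :=
    hFz (τ₀ + 2⁻¹) ⟨by norm_num, by norm_num⟩
  have hpos := hSFFpos (γ (τ₀ + 2⁻¹)) (hrange (Set.mem_range_self _)) (v (τ₀ + 2⁻¹)) hvne htang
  rw [show (∑ i, ∑ j, v (τ₀ + 2⁻¹) i * hess g ginv s (γ (τ₀ + 2⁻¹)) i j * v (τ₀ + 2⁻¹) j)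
      = Q (τ₀ + 2⁻¹) from rfl, hQτs] at hpos
  exact lt_irrefl 0 hpos
end
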